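/- Let α > 0 and define f_α : (0,∞) → ℝ by f_α(t) = π √(α/Γ(α)) · t^{α−1} · e^{−t²/2}/√(2π), and f̂_α : ℝ → ℂ by f̂_α(y) = √(2/π) ∫_0^∞ f_α(t) e^{i y t} dt. Then f̂_α(y) ≠ 0 for every y ∈ ℝ. -/

import Mathlib

/-!
Up to a positive constant, `f̂_α` is `u = gaussMomentFourier (α - 1)`, where
`gaussMomentFourier β y = ∫₀^∞ t^β e^{-t²/2} e^{iyt} dt`. Differentiating under the integral sign
gives `u' = i · gaussMomentFourier α`, and an integration by parts then shows
`u'' + y u' + α u = 0`. The coefficients are real, so `ū` solves the same equation and the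
Wronskian `W = ū u' - u ū'` satisfies `W' = -y W`, i.e. `W(y) = W(0) e^{-y²/2}`. Now
`W(0) = 2i ∫₀^∞ t^{α-1} e^{-t²/2} dt · ∫₀^∞ t^α e^{-t²/2} dt ≠ 0`, whereas `u(y) = 0` would force
`W(y) = 0`.
-/

open MeasureTheory

noncomputable def falpha (α t : ℝ) : ℝ :=
  Real.pi * Real.sqrt (α / Real.Gamma α) * t ^ (α - 1) * (Real.exp (-t ^ 2 / 2) / Real.sqrt (2 * Real.pi))

noncomputable def fhatalpha (α : ℝ) (y : ℝ) : ℂ :=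
  (Real.sqrt (2 / Real.pi) : ℂ)
    * ∫ t in Set.Ioi (0 : ℝ), (falpha α t : ℂ) * Complex.exp (Complex.I * y * t)

open Set Filter Complex Topology

noncomputable def gaussMomentFourierIntegrand (β y t : ℝ) : ℂ :=
  ((t ^ β * Real.exp (-t ^ 2 / 2) : ℝ) : ℂ) * cexp (I * y * t)

noncomputable def gaussMomentFourier (β y : ℝ) : ℂ :=
  ∫ t in Ioi 0, gaussMomentFourierIntegrand β y t

lemma integrableOn_rpow_mul_exp_neg_sq_div_two {β : ℝ} (hβ : -1 < β) :
    IntegrableOn (fun t : ℝ => t ^ β * Real.exp (-t ^ 2 / 2)) (Ioi 0) := by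
  simpa only [neg_mul, one_div, ← neg_div, inv_mul_eq_div] using
    integrableOn_rpow_mul_exp_neg_mul_sq (by norm_num : (0 : ℝ) < 1 / 2) hβ

lemma integral_rpow_mul_exp_neg_sq_div_two_pos {β : ℝ} (hβ : -1 < β) :
    0 < ∫ t in Ioi 0, t ^ β * Real.exp (-t ^ 2 / 2) := by
  have h := integral_rpow_mul_exp_neg_mul_rpow two_pos hβ (by norm_num : (0 : ℝ) < 1 / 2)
  simp only [Real.rpow_two, neg_mul, one_div, ← neg_div, inv_mul_eq_div] at h
  rw [h]
  have := Real.Gamma_pos_of_pos (by linarith : 0 < (β + 1) / 2)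
  positivity

lemma norm_gaussMomentFourierIntegrand (β y t : ℝ) :
    ‖gaussMomentFourierIntegrand β y t‖ = |t ^ β * Real.exp (-t ^ 2 / 2)| := by
  rw [gaussMomentFourierIntegrand, norm_mul, norm_real, Real.norm_eq_abs, norm_exp]
  simp

lemma continuousOn_gaussMomentFourierIntegrand (β y : ℝ) :
    ContinuousOn (gaussMomentFourierIntegrand β y) (Ioi 0) := by
  have hpow : ContinuousOn (fun t : ℝ => t ^ β) (Ioi 0) :=
    fun t ht => (Real.continuousAt_rpow_const t β (.inl ht.ne')).continuousWithinAt
  unfold gaussMomentFourierIntegrand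
  fun_prop

lemma integrableOn_gaussMomentFourierIntegrand {β : ℝ} (hβ : -1 < β) (y : ℝ) :
    IntegrableOn (gaussMomentFourierIntegrand β y) (Ioi 0) :=
  (integrableOn_rpow_mul_exp_neg_sq_div_two hβ).norm.mono'
    ((continuousOn_gaussMomentFourierIntegrand β y).aestronglyMeasurable measurableSet_Ioi)
    (.of_forall fun t => (norm_gaussMomentFourierIntegrand β y t).le)

lemma gaussMomentFourier_zero (β : ℝ) :
    gaussMomentFourier β 0 = ((∫ t in Ioi 0, t ^ β * Real.exp (-t ^ 2 / 2) : ℝ) : ℂ) := by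
  simp only [gaussMomentFourier, gaussMomentFourierIntegrand, ofReal_zero, mul_zero, zero_mul,
    Complex.exp_zero, mul_one]
  exact integral_complex_ofReal

lemma ofReal_mul_gaussMomentFourierIntegrand (β y : ℝ) {t : ℝ} (ht : 0 < t) :
    t * gaussMomentFourierIntegrand β y t = gaussMomentFourierIntegrand (β + 1) y t := by
  simp only [gaussMomentFourierIntegrand, Real.rpow_add_one ht.ne']
  push_cast
  ring

lemma hasDerivAt_gaussMomentFourierIntegrand_param (β y t : ℝ) :
    HasDerivAt (gaussMomentFourierIntegrand β · t)
      (I * t * gaussMomentFourierIntegrand β y t) y := by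
  have harg : HasDerivAt (fun y : ℝ => I * y * t) (I * t) y := by
    simpa using ((hasDerivAt_id (y : ℂ)).comp_ofReal.const_mul I).mul_const (t : ℂ)
  refine (harg.cexp.const_mul ((t ^ β * Real.exp (-t ^ 2 / 2) : ℝ) : ℂ)).congr_deriv ?_
  rw [gaussMomentFourierIntegrand]
  ring

lemma hasDerivAt_gaussMomentFourier {β : ℝ} (hβ : -1 < β) (y : ℝ) :
    HasDerivAt (gaussMomentFourier β) (I * gaussMomentFourier (β + 1) y) y := by
  have hF' : ∀ x, ∀ t ∈ Ioi (0 : ℝ),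
      I * t * gaussMomentFourierIntegrand β x t = I * gaussMomentFourierIntegrand (β + 1) x t :=
    fun x t ht => by rw [mul_assoc, ofReal_mul_gaussMomentFourierIntegrand β x ht]
  have hderiv := hasDerivAt_integral_of_dominated_loc_of_deriv_le (μ := volume.restrict (Ioi 0))
    (F' := fun x t => I * t * gaussMomentFourierIntegrand β x t) (x₀ := y) univ_mem
    (.of_forall fun x =>
      (continuousOn_gaussMomentFourierIntegrand β x).aestronglyMeasurable measurableSet_Ioi)
    (integrableOn_gaussMomentFourierIntegrand hβ y)
    (IntegrableOn.congr_fun ((integrableOn_gaussMomentFourierIntegrand (by linarith) y).const_mul I)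
      (fun t ht => (hF' y t ht).symm) measurableSet_Ioi).aestronglyMeasurable
    (bound := fun t => |t ^ (β + 1) * Real.exp (-t ^ 2 / 2)|)
    (by
      filter_upwards [ae_restrict_mem measurableSet_Ioi] with t ht x _
      rw [hF' x t ht, norm_mul, norm_I, one_mul, norm_gaussMomentFourierIntegrand])
    (integrableOn_rpow_mul_exp_neg_sq_div_two (by linarith)).abs
    (.of_forall fun t x _ => hasDerivAt_gaussMomentFourierIntegrand_param β x t)
  rw [setIntegral_congr_fun measurableSet_Ioi (hF' y), integral_const_mul] at hderiv
  exact hderiv.2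

lemma hasDerivAt_gaussMomentFourierIntegrand (β y : ℝ) {t : ℝ} (ht : 0 < t) :
    HasDerivAt (gaussMomentFourierIntegrand (β + 1) y)
      ((β + 1) * gaussMomentFourierIntegrand β y t
        + I * y * gaussMomentFourierIntegrand (β + 1) y t
        - gaussMomentFourierIntegrand (β + 2) y t) t := by
  have hpow : HasDerivAt (fun t : ℝ => t ^ (β + 1)) ((β + 1) * t ^ β) t := by
    simpa using Real.hasDerivAt_rpow_const (p := β + 1) (.inl ht.ne')
  have hgauss :
      HasDerivAt (fun t : ℝ => Real.exp (-t ^ 2 / 2)) (Real.exp (-t ^ 2 / 2) * -t) t := by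
    refine ((hasDerivAt_pow 2 t).neg.div_const 2).exp.congr_deriv ?_
    simp only [Pi.neg_apply]
    push_cast
    ring
  have harg : HasDerivAt (fun t : ℝ => I * y * t) (I * y) t := by
    simpa using (hasDerivAt_id (t : ℂ)).comp_ofReal.const_mul (I * y)
  refine ((hpow.mul hgauss).ofReal_comp.mul harg.cexp).congr_deriv ?_
  simp only [gaussMomentFourierIntegrand, Pi.mul_apply, show β + 2 = β + 1 + 1 by ring,
    Real.rpow_add_one ht.ne']
  push_cast
  ring

lemma tendsto_gaussMomentFourierIntegrand_atTop (β y : ℝ) :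
    Tendsto (gaussMomentFourierIntegrand β y) atTop (𝓝 0) := by
  have hexp : Tendsto (fun t : ℝ => Real.exp (-(1 / 2) * t)) atTop (𝓝 0) := by
    simpa using tendsto_rpow_mul_exp_neg_mul_atTop_nhds_zero 0 (1 / 2) one_half_pos
  have hdecay := (rpow_mul_exp_neg_mul_sq_isLittleO_exp_neg one_half_pos β).trans_tendsto hexp
  rw [tendsto_zero_iff_norm_tendsto_zero]
  simp_rw [norm_gaussMomentFourierIntegrand]
  simpa [neg_div, div_eq_inv_mul] using hdecay.abs

lemma gaussMomentFourier_add_two {β : ℝ} (hβ : -1 < β) (y : ℝ) :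
    gaussMomentFourier (β + 2) y
      = (β + 1) * gaussMomentFourier β y + I * y * gaussMomentFourier (β + 1) y := by
  have h0 := (integrableOn_gaussMomentFourierIntegrand hβ y).const_mul ((β : ℂ) + 1)
  have h1 :=
    (integrableOn_gaussMomentFourierIntegrand (β := β + 1) (by linarith) y).const_mul (I * y)
  have h2 := integrableOn_gaussMomentFourierIntegrand (β := β + 2) (by linarith) y
  have hcont : ContinuousWithinAt (gaussMomentFourierIntegrand (β + 1) y) (Ici 0) 0 := by
    have := Real.continuousAt_rpow_const 0 (β + 1) (.inr (by linarith))
    unfold gaussMomentFourierIntegrand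
    fun_prop
  have hftc := integral_Ioi_of_hasDerivAt_of_tendsto hcont
    (fun t ht => hasDerivAt_gaussMomentFourierIntegrand β y ht) ((h0.add h1).sub h2)
    (tendsto_gaussMomentFourierIntegrand_atTop (β + 1) y)
  rw [integral_sub (by exact h0.add h1) h2, integral_add (by exact h0) (by exact h1),
    integral_const_mul, integral_const_mul] at hftc
  have hzero : gaussMomentFourierIntegrand (β + 1) y 0 = 0 := by
    simp [gaussMomentFourierIntegrand, Real.zero_rpow (by linarith : β + 1 ≠ 0)]
  rw [hzero, sub_zero] at hftc
  unfold gaussMomentFourier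
  linear_combination -hftc

def conjWronskian (u v : ℝ → ℂ) (x : ℝ) : ℂ :=
  star (u x) * v x - u x * star (v x)

lemma conjWronskian_eq_mul_exp {a : ℝ} {u v : ℝ → ℂ} (hu : ∀ x, HasDerivAt u (v x) x)
    (hv : ∀ x, HasDerivAt v (-a * u x - x * v x) x) (x : ℝ) :
    conjWronskian u v x = conjWronskian u v 0 * Real.exp (-x ^ 2 / 2) := by
  have hW : ∀ x, HasDerivAt (conjWronskian u v) (-x * conjWronskian u v x) x := by
    intro x
    refine (((hu x).star.mul (hv x)).sub ((hu x).mul (hv x).star)).congr_deriv ?_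
    simp only [conjWronskian, star_sub, star_mul', star_neg, Complex.star_def, conj_ofReal]
    ring
  have hgauss : ∀ x : ℝ,
      HasDerivAt (fun x : ℝ => Real.exp (x ^ 2 / 2)) (Real.exp (x ^ 2 / 2) * x) x :=
    fun x => ((hasDerivAt_pow 2 x).div_const 2).exp.congr_deriv (by push_cast; ring)
  have hconst : ∀ x, HasDerivAt (fun x => conjWronskian u v x * Real.exp (x ^ 2 / 2)) 0 x :=
    fun x => ((hW x).mul (hgauss x).ofReal_comp).congr_deriv (by push_cast; ring)
  have h := is_const_of_deriv_eq_zero (fun x => (hconst x).differentiableAt)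
    (fun x => (hconst x).deriv) x 0
  simp only [ne_eq, OfNat.ofNat_ne_zero, not_false_eq_true, zero_pow, zero_div, Real.exp_zero,
    ofReal_one, mul_one] at h
  rw [← h, mul_assoc, ← ofReal_mul, ← Real.exp_add, show x ^ 2 / 2 + -x ^ 2 / 2 = 0 by ring,
    Real.exp_zero, ofReal_one, mul_one]

theorem gaussMomentFourier_ne_zero {β : ℝ} (hβ : -1 < β) (y : ℝ) :
    gaussMomentFourier β y ≠ 0 := by
  set v : ℝ → ℂ := fun x => I * gaussMomentFourier (β + 1) x
  have hu : ∀ x, HasDerivAt (gaussMomentFourier β) (v x) x := hasDerivAt_gaussMomentFourier hβ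
  have hv : ∀ x, HasDerivAt v (-(β + 1 : ℝ) * gaussMomentFourier β x - x * v x) x := by
    intro x
    refine ((hasDerivAt_gaussMomentFourier (by linarith) x).const_mul I).congr_deriv ?_
    rw [show β + 1 + 1 = β + 2 by ring, gaussMomentFourier_add_two hβ x]
    push_cast
    linear_combination
      ((β + 1) * gaussMomentFourier β x + I * x * gaussMomentFourier (β + 1) x) * I_sq
  have hW0 : conjWronskian (gaussMomentFourier β) v 0
      = 2 * I * ((∫ t in Ioi 0, t ^ β * Real.exp (-t ^ 2 / 2) : ℝ) : ℂ)
          * ((∫ t in Ioi 0, t ^ (β + 1) * Real.exp (-t ^ 2 / 2) : ℝ) : ℂ) := by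
    simp only [conjWronskian, v, gaussMomentFourier_zero, star_mul', Complex.star_def, conj_ofReal,
      conj_I]
    ring
  have hW0_ne : conjWronskian (gaussMomentFourier β) v 0 ≠ 0 := by
    rw [hW0]
    have h0 := integral_rpow_mul_exp_neg_sq_div_two_pos hβ
    have h1 := integral_rpow_mul_exp_neg_sq_div_two_pos (by linarith : -1 < β + 1)
    simp only [ne_eq, mul_eq_zero, OfNat.ofNat_ne_zero, I_ne_zero, ofReal_eq_zero, h0.ne', h1.ne',
      or_self, not_false_eq_true]
  intro hy
  have hWy := conjWronskian_eq_mul_exp hu hv y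
  rw [conjWronskian, hy, star_zero, zero_mul, zero_mul, sub_zero, eq_comm, mul_eq_zero] at hWy
  exact hWy.elim hW0_ne (by exact_mod_cast (Real.exp_pos _).ne')

lemma integral_falpha_mul_exp (α y : ℝ) :
    ∫ t in Ioi 0, (falpha α t : ℂ) * cexp (I * y * t)
      = (Real.pi * Real.sqrt (α / Real.Gamma α) / Real.sqrt (2 * Real.pi) : ℝ)
          * gaussMomentFourier (α - 1) y := by
  rw [gaussMomentFourier, ← integral_const_mul]
  congr 1 with t
  simp only [falpha, gaussMomentFourierIntegrand]
  push_cast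
  ring

theorem fhatalpha_ne_zero (α : ℝ) (hα : 0 < α) (y : ℝ) : fhatalpha α y ≠ 0 := by
  have hΓ := Real.Gamma_pos_of_pos hα
  have hsqrt : 0 < Real.sqrt (2 / Real.pi) := by positivity
  have hconst : 0 < Real.pi * Real.sqrt (α / Real.Gamma α) / Real.sqrt (2 * Real.pi) := by
    positivity
  rw [fhatalpha, integral_falpha_mul_exp]
  exact mul_ne_zero (ofReal_ne_zero.2 hsqrt.ne')
    (mul_ne_zero (ofReal_ne_zero.2 hconst.ne') (gaussMomentFourier_ne_zero (by linarith) y))
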